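/- arXiv:2111.09257 — 6 statements merged into one kernel-verified Lean document; each statement's English description precedes it below -/
import Mathlib

section
/- Let f(x,y) = x² - c·x·y with c > √(3/2). The minimum of f subject to x² - (3/2)y² ≥ a², x ≤ b, and 0 ≤ y (where b ≥ a > 0) is attained at (x*, y*) = (b, √((2/3)(b² - a²))), with minimum value b² - c·b·√((2/3)(b² - a²)). -/
private lemma key_mono (a x b : ℝ) (ha : 0 < a) (hax : a ≤ x) (hxb : x ≤ b) :
    b * Real.sqrt (b^2 - a^2) - x * Real.sqrt (x^2 - a^2) ≥ b^2 - x^2 := by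
  have hx : 0 < x := lt_of_lt_of_le ha hax
  have hb : 0 < b := lt_of_lt_of_le hx hxb
  have hq2 : (0:ℝ) ≤ x^2 - a^2 := by nlinarith
  have hp2 : (0:ℝ) ≤ b^2 - a^2 := by nlinarith
  set p := Real.sqrt (b^2 - a^2) with hpdef
  set q := Real.sqrt (x^2 - a^2) with hqdef
  clear_value p q
  have hp : 0 ≤ p := hpdef ▸ Real.sqrt_nonneg _
  have hq : 0 ≤ q := hqdef ▸ Real.sqrt_nonneg _
  have hpsq : p^2 = b^2 - a^2 := hpdef ▸ Real.sq_sqrt hp2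
  have hqsq : q^2 = x^2 - a^2 := hqdef ▸ Real.sq_sqrt hq2
  -- b*q ≤ x*p
  have hbq : b * q ≤ x * p := by
    have h1 : b * q = Real.sqrt (b^2 * (x^2 - a^2)) := by
      rw [Real.sqrt_mul (sq_nonneg b), Real.sqrt_sq hb.le, hqdef]
    have h2 : x * p = Real.sqrt (x^2 * (b^2 - a^2)) := by
      rw [Real.sqrt_mul (sq_nonneg x), Real.sqrt_sq hx.le, hpdef]
    rw [h1, h2]
    apply Real.sqrt_le_sqrt
    nlinarith [mul_le_mul hxb hxb hx.le hb.le, sq_nonneg a]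
  have hbp : (0:ℝ) < b + p := by positivity
  have hxq : (0:ℝ) < x + q := by positivity
  have hid : (b*p - x*q - (b^2 - x^2)) * ((b+p)*(x+q)) = a^2*(x*p - b*q) := by
    linear_combination (b*(x+q)) * hpsq - (x*(b+p)) * hqsq
  have h8 : 0 ≤ (b*p - x*q - (b^2 - x^2)) * ((b+p)*(x+q)) := by
    rw [hid]; exact mul_nonneg (sq_nonneg a) (sub_nonneg.2 hbq)
  nlinarith [h8, mul_pos hbp hxq]

set_option maxHeartbeats 1000000 in
theorem stmt_0 (a b c : ℝ) (ha : 0 < a) (hab : a ≤ b) (hc : Real.sqrt (3/2) < c) :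
    (b^2 - (3/2) * (Real.sqrt ((2/3) * (b^2 - a^2)))^2 ≥ a^2 ∧
      b ≤ b ∧ 0 ≤ Real.sqrt ((2/3) * (b^2 - a^2)) ∧
      b^2 - c * b * Real.sqrt ((2/3) * (b^2 - a^2))
        = b^2 - c * b * Real.sqrt ((2/3) * (b^2 - a^2))) ∧
    IsLeast {v : ℝ | ∃ x y : ℝ, x^2 - (3/2) * y^2 ≥ a^2 ∧ x ≤ b ∧ 0 ≤ y ∧
        v = x^2 - c * x * y}
      (b^2 - c * b * Real.sqrt ((2/3) * (b^2 - a^2))) := by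
  have hb : 0 < b := lt_of_lt_of_le ha hab
  have hba2 : (0:ℝ) ≤ (2/3) * (b^2 - a^2) := by nlinarith
  have hYsq : (Real.sqrt ((2/3) * (b^2 - a^2)))^2 = (2/3) * (b^2 - a^2) :=
    Real.sq_sqrt hba2
  set Y := Real.sqrt ((2/3) * (b^2 - a^2)) with hYdef
  clear_value Y
  have hY : 0 ≤ Y := hYdef ▸ Real.sqrt_nonneg _
  have hs32 : (0:ℝ) ≤ Real.sqrt (3/2) := Real.sqrt_nonneg _
  have hcpos : 0 < c := lt_of_le_of_lt hs32 hc
  -- √(3/2) * Y = √(b²-a²)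
  have hsY : Real.sqrt (3/2) * Y = Real.sqrt (b^2 - a^2) := by
    rw [hYdef, ← Real.sqrt_mul (by norm_num : (0:ℝ) ≤ 3/2)]
    congr 1; ring
  refine ⟨⟨by rw [hYsq]; nlinarith, le_refl b, hY, rfl⟩, ?_, ?_⟩
  · -- membership
    exact ⟨b, Y, by rw [hYsq]; nlinarith, le_refl b, hY, rfl⟩
  · -- lower bound
    rintro v ⟨x, y, h1, h2, h3, rfl⟩
    set p := Real.sqrt (b^2 - a^2) with hpdef
    clear_value p
    have hp : 0 ≤ p := hpdef ▸ Real.sqrt_nonneg _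
    have hpsq : p^2 = b^2 - a^2 := hpdef ▸ Real.sq_sqrt (by nlinarith)
    have hpb : p ≤ b := by
      have h0 := Real.sqrt_le_sqrt (show b^2 - a^2 ≤ b^2 by nlinarith)
      rw [Real.sqrt_sq hb.le] at h0; rw [hpdef]; exact h0
    have hcY : p ≤ c * Y := by
      calc p = Real.sqrt (3/2) * Y := hsY.symm
        _ ≤ c * Y := mul_le_mul_of_nonneg_right hc.le hY
    rcases le_or_gt x 0 with hx0 | hx0
    · -- x ≤ 0 : value ≥ x² ≥ a² ≥ b² - c b Y
      have h4 : 0 ≤ - (c * x * y) := by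
        have : c * x * y ≤ 0 := mul_nonpos_of_nonpos_of_nonneg
          (mul_nonpos_of_nonneg_of_nonpos hcpos.le hx0) h3
        linarith
      have hxa : a^2 ≤ x^2 := by nlinarith
      have hbY : b^2 - a^2 ≤ c * b * Y := by
        have h5 : b * p ≤ b * (c * Y) := mul_le_mul_of_nonneg_left hcY hb.le
        nlinarith
      nlinarith
    · -- x > 0
      have hxa2 : a^2 ≤ x^2 := by nlinarith [sq_nonneg y]
      have hax : a ≤ x := le_of_pow_le_pow_left₀ two_ne_zero hx0.le hxa2
      have hSsq : (0:ℝ) ≤ (2/3) * (x^2 - a^2) := by nlinarith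
      set S := Real.sqrt ((2/3) * (x^2 - a^2)) with hSdef
      clear_value S
      have hS : 0 ≤ S := hSdef ▸ Real.sqrt_nonneg _
      have hS2 : S^2 = (2/3) * (x^2 - a^2) := hSdef ▸ Real.sq_sqrt hSsq
      have hyS : y ≤ S := by
        rw [hSdef]
        rw [Real.le_sqrt h3 hSsq]
        nlinarith
      set q := Real.sqrt (x^2 - a^2) with hqdef
      clear_value q
      have hq : 0 ≤ q := hqdef ▸ Real.sqrt_nonneg _
      have hqsq : q^2 = x^2 - a^2 := hqdef ▸ Real.sq_sqrt (by nlinarith)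
      have hsS : Real.sqrt (3/2) * S = q := by
        rw [hSdef, hqdef, ← Real.sqrt_mul (by norm_num : (0:ℝ) ≤ 3/2)]
        congr 1; ring
      -- main monotonicity
      have hkey : b * p - x * q ≥ b^2 - x^2 := by
        have hk := key_mono a x b ha hax h2
        rw [← hpdef, ← hqdef] at hk; exact hk
      have hbYxS : b * Y - x * S ≥ 0 := by
        have h1' : b * Y = Real.sqrt ((2/3) * (b^2 * (b^2 - a^2))) := by
          rw [show (2/3) * (b^2 * (b^2 - a^2)) = b^2 * ((2/3) * (b^2-a^2)) by ring,
            Real.sqrt_mul (sq_nonneg b), Real.sqrt_sq hb.le, hYdef]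
        have h2' : x * S = Real.sqrt ((2/3) * (x^2 * (x^2 - a^2))) := by
          rw [show (2/3) * (x^2 * (x^2 - a^2)) = x^2 * ((2/3) * (x^2-a^2)) by ring,
            Real.sqrt_mul (sq_nonneg x), Real.sqrt_sq hx0.le, hSdef]
        rw [h1', h2']
        have h3' := Real.sqrt_le_sqrt (show (2/3) * (x^2 * (x^2 - a^2)) ≤ (2/3) * (b^2 * (b^2 - a^2)) by
          have hbx : (0:ℝ) ≤ b^2 - x^2 := by nlinarith [mul_le_mul h2 h2 hx0.le hb.le]
          nlinarith [mul_nonneg hbx (show (0:ℝ) ≤ b^2 + x^2 - a^2 by nlinarith)])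
        linarith
      -- c * (b Y - x S) ≥ √(3/2) * (b Y - x S) = b p - x q ≥ b² - x²
      have hstep : c * (b * Y - x * S) ≥ b^2 - x^2 := by
        have h6 : Real.sqrt (3/2) * (b * Y - x * S) ≤ c * (b * Y - x * S) :=
          mul_le_mul_of_nonneg_right hc.le hbYxS
        have h7 : Real.sqrt (3/2) * (b * Y - x * S) = b * p - x * q := by
          rw [mul_sub]
          rw [show Real.sqrt (3/2) * (b * Y) = b * (Real.sqrt (3/2) * Y) by ring,
            show Real.sqrt (3/2) * (x * S) = x * (Real.sqrt (3/2) * S) by ring,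
            hsY, hsS, hpdef]
        linarith
      have hyy : c * x * y ≤ c * x * S :=
        mul_le_mul_of_nonneg_left hyS (by positivity)
      nlinarith
end

section
/- Let a, b, c be reals with b ≥ a > 0 and c > √(3/2). For all (x,y) in the set {(x,y) : x² - (3/2)y² ≥ a², x ≤ b, 0 ≤ y}, we have x² - c·x·y ≥ b² - c·b·√((2/3)(b² - a²)). -/
set_option maxHeartbeats 1000000 in
theorem stmt_1 (a b c : ℝ) (ha : 0 < a) (hab : a ≤ b) (hc : Real.sqrt (3/2) < c)
    (x y : ℝ) (h1 : x^2 - (3/2) * y^2 ≥ a^2) (h2 : x ≤ b) (h3 : 0 ≤ y) :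
    x^2 - c * x * y ≥ b^2 - c * b * Real.sqrt ((2/3) * (b^2 - a^2)) := by
  set r := Real.sqrt (3/2) with hrdef
  have hr2 : r^2 = 3/2 := Real.sq_sqrt (by norm_num)
  have hr0 : 0 < r := Real.sqrt_pos.mpr (by norm_num)
  have hb0 : 0 < b := lt_of_lt_of_le ha hab
  have hab2 : a^2 ≤ b^2 := pow_le_pow_left₀ ha.le hab 2
  have hba : 0 ≤ (2/3) * (b^2 - a^2) := by linarith
  set s := Real.sqrt ((2/3) * (b^2 - a^2)) with hsdef
  have hs0 : 0 ≤ s := Real.sqrt_nonneg _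
  have hs2 : s^2 = (2/3) * (b^2 - a^2) := Real.sq_sqrt hba
  clear_value r s
  have hc0 : 0 < c := lt_trans hr0 hc
  have hs2' : r^2 * s^2 = b^2 - a^2 := by rw [hr2, hs2]; ring
  have hbrs : r * s ≤ b := by
    have hsq : (r*s)^2 ≤ b^2 := by rw [mul_pow]; linarith [sq_nonneg a]
    exact (pow_le_pow_iff_left₀ (mul_nonneg hr0.le hs0) hb0.le two_ne_zero).mp hsq
  rcases le_or_gt x 0 with hx | hx
  · -- x ≤ 0 : then x² - cxy ≥ x² ≥ a² ≥ b² - cbs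
    have h4 : c * x * y ≤ 0 :=
      mul_nonpos_of_nonpos_of_nonneg (mul_nonpos_of_nonneg_of_nonpos hc0.le hx) h3
    have h5 : a^2 ≤ x^2 := by linarith [sq_nonneg y]
    have m1 := mul_le_mul_of_nonneg_right hc.le (mul_nonneg hb0.le hs0)
    have m2 := mul_le_mul_of_nonneg_right hbrs (mul_nonneg hr0.le hs0)
    have h6 : r^2 * s^2 ≤ c * (b * s) := by linarith [m1, m2]
    linarith
  · -- x > 0
    have hxa : 0 ≤ (2/3) * (x^2 - a^2) := by linarith [sq_nonneg y]
    set u := Real.sqrt ((2/3) * (x^2 - a^2)) with hudef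
    have hu0 : 0 ≤ u := Real.sqrt_nonneg _
    have hu2 : u^2 = (2/3) * (x^2 - a^2) := Real.sq_sqrt hxa
    have hyu : y ≤ u := by
      rw [hudef]; exact (Real.le_sqrt h3 hxa).mpr (by linarith)
    clear_value u
    have hu2' : r^2 * u^2 = x^2 - a^2 := by rw [hr2, hu2]; ring
    have hx2b : x^2 ≤ b^2 := pow_le_pow_left₀ hx.le h2 2
    have hus : u ≤ s := by
      have hsq : u^2 ≤ s^2 := by rw [hu2, hs2]; linarith
      exact (pow_le_pow_iff_left₀ hu0 hs0 two_ne_zero).mp hsq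
    have hxru : r * u ≤ x := by
      have hsq : (r*u)^2 ≤ x^2 := by rw [mul_pow]; linarith [sq_nonneg a]
      exact (pow_le_pow_iff_left₀ (mul_nonneg hr0.le hu0) hx.le two_ne_zero).mp hsq
    have hesq : (s*x)^2 - (u*b)^2 = (2/3) * a^2 * (b^2 - x^2) := by
      rw [mul_pow, mul_pow, hs2, hu2]; ring
    have hsq : (u*b)^2 ≤ (s*x)^2 := by
      have := mul_nonneg (sq_nonneg a) (sub_nonneg.mpr hx2b)
      linarith
    have hsx : u * b ≤ s * x :=
      (pow_le_pow_iff_left₀ (mul_nonneg hu0 hb0.le) (mul_nonneg hs0 hx.le) two_ne_zero).mp hsq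
    have hid1 : (b - r*s) * (b + r*s) = a^2 := by
      linear_combination (-(s^2)) * hr2 - (3/2) * hs2
    have hid2 : (x - r*u) * (x + r*u) = a^2 := by
      linear_combination (-(u^2)) * hr2 - (3/2) * hu2
    have hpos1 : 0 < b + r*s := by have := mul_nonneg hr0.le hs0; linarith
    have hpos2 : 0 < x + r*u := by have := mul_nonneg hr0.le hu0; linarith
    have hkey : u * (x - r*u) ≤ s * (b - r*s) := by
      rw [← mul_le_mul_iff_left₀ (mul_pos hpos1 hpos2)]
      have e1 : s * (b - r*s) * ((b + r*s) * (x + r*u)) = s * a^2 * (x + r*u) := by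
        rw [show s * (b - r*s) * ((b + r*s) * (x + r*u))
            = s * ((b - r*s) * (b + r*s)) * (x + r*u) by ring, hid1]
      have e2 : u * (x - r*u) * ((b + r*s) * (x + r*u)) = u * a^2 * (b + r*s) := by
        rw [show u * (x - r*u) * ((b + r*s) * (x + r*u))
            = u * ((x - r*u) * (x + r*u)) * (b + r*s) by ring, hid2]
      rw [e1, e2]
      have hh : 0 ≤ a^2 * (s*x - u*b) := mul_nonneg (sq_nonneg a) (sub_nonneg.mpr hsx)
      linarith [hh]
    have e3 : r * (u * (x - r*u)) ≤ r * (s * (b - r*s)) :=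
      mul_le_mul_of_nonneg_left hkey hr0.le
    have e4 : 0 ≤ (c - r) * (b*s - x*u) := by
      refine mul_nonneg (by linarith) ?_
      have hxu : x * u ≤ b * u := mul_le_mul_of_nonneg_right h2 hu0
      have hbu : b * u ≤ b * s := mul_le_mul_of_nonneg_left hus hb0.le
      linarith
    have hstep : x^2 - c * x * u ≥ b^2 - c * b * s := by linarith [e3, e4, hu2', hs2']
    have hmono : x^2 - c * x * y ≥ x^2 - c * x * u := by
      have hh2 : 0 ≤ c * x * (u - y) :=
        mul_nonneg (mul_nonneg hc0.le hx.le) (sub_nonneg.mpr hyu)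
      linarith [hh2]
    linarith
end

section
/- Suppose x, y, g ≥ 0, b ≥ a > 0, c > √(3/2), x² - (3/2)y² ≥ a² - g, and 0 ≤ x ≤ b. Then x² - c·x·y ≥ b² - c·b·√((2/3)(b² - a²)) - c·√((2/3)(b² - a²))·√g - c·(b + √g)·√((2/3)(2b√g + g)). -/
set_option maxHeartbeats 800000 in
lemma key_min (a c X B y : ℝ) (ha : 0 < a) (haX : a ≤ X) (hXB : X ≤ B) (hy : 0 ≤ y)
    (hc : Real.sqrt (3/2) < c) (hcon : a^2 + (3/2)*y^2 ≤ X^2) :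
    B^2 - c * B * Real.sqrt ((2/3)*(B^2 - a^2)) ≤ X^2 - c*X*y := by
  set K := Real.sqrt (2/3) with hK
  have hK0 : 0 < K := Real.sqrt_pos.2 (by norm_num)
  have hK2 : K^2 = 2/3 := Real.sq_sqrt (by norm_num)
  have h32K : Real.sqrt (3/2) * K = 1 := by
    rw [hK, ← Real.sqrt_mul (by norm_num : (0:ℝ) ≤ 3/2)]
    norm_num
  have hcK : 1 < c * K := by
    calc 1 = Real.sqrt (3/2) * K := h32K.symm
    _ < c * K := mul_lt_mul_of_pos_right hc hK0
  have hc0 : 0 < c := lt_trans (Real.sqrt_pos.2 (by norm_num)) hc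
  have hBa : a ≤ B := le_trans haX hXB
  set SB := Real.sqrt ((2/3)*(B^2-a^2)) with hSBdef
  set St := Real.sqrt ((2/3)*(X^2-a^2)) with hStdef
  have hSB0 : 0 ≤ SB := Real.sqrt_nonneg _
  have hSt0 : 0 ≤ St := Real.sqrt_nonneg _
  have hSB2 : SB^2 = (2/3)*(B^2-a^2) := Real.sq_sqrt (by nlinarith)
  have hSt2 : St^2 = (2/3)*(X^2-a^2) := Real.sq_sqrt (by nlinarith)
  have hySt : y ≤ St := by
    rw [hStdef]
    rw [show y = Real.sqrt (y^2) by rw [Real.sqrt_sq hy]]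
    apply Real.sqrt_le_sqrt
    nlinarith
  have hX0 : 0 ≤ X := le_trans ha.le haX
  have hB0 : 0 ≤ B := le_trans hX0 hXB
  have hstep1 : X^2 - c*X*St ≤ X^2 - c*X*y := by
    have : c*X*y ≤ c*X*St := by
      apply mul_le_mul_of_nonneg_left hySt
      exact mul_nonneg hc0.le hX0
    linarith
  -- main monotonicity: B^2 - c*B*SB ≤ X^2 - c*X*St
  have hD : 0 ≤ B^2 - X^2 := by nlinarith
  have hP0 : 0 ≤ B*SB := mul_nonneg hB0 hSB0
  have hQ0 : 0 ≤ X*St := mul_nonneg hX0 hSt0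
  have hKsum : K*(B*SB + X*St) ≤ (2/3)*(B^2 + X^2 - a^2) := by
    nlinarith [sq_nonneg (K*B - SB), sq_nonneg (K*X - St)]
  have hmain : (B^2 - X^2)*(B*SB + X*St) ≤ (c*(B*SB - X*St))*(B*SB + X*St) := by
    have hE : 0 ≤ (2/3)*(B^2 + X^2 - a^2) := by nlinarith
    have h1 : c*K*((B^2-X^2)*(B*SB + X*St)) ≤ c*(B^2-X^2)*((2/3)*(B^2+X^2-a^2)) := by
      have := mul_le_mul_of_nonneg_left hKsum (mul_nonneg hc0.le hD)
      nlinarith [this]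
    have h2 : c*(B^2-X^2)*((2/3)*(B^2+X^2-a^2)) = (c*(B*SB - X*St))*(B*SB + X*St) := by
      linear_combination (-(c*B^2))*hSB2 + (c*X^2)*hSt2
    nlinarith [mul_nonneg hD (add_nonneg hP0 hQ0)]
  have hkey : B^2 - X^2 ≤ c*(B*SB - X*St) := by
    rcases (add_nonneg hP0 hQ0).eq_or_lt with hz | hpos
    · have hPz : B*SB = 0 := by linarith
      have hQz : X*St = 0 := by linarith
      have hSBz : SB = 0 := by
        rcases mul_eq_zero.1 hPz with h | h
        · linarith
        · exact h
      have hB2 : B^2 = a^2 := by nlinarith [hSB2, hSBz]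
      have hStz : St = 0 := by
        rcases mul_eq_zero.1 hQz with h | h
        · linarith
        · exact h
      nlinarith
    · exact le_of_mul_le_mul_right hmain hpos
  linarith [hstep1, hkey]

set_option maxHeartbeats 800000 in
theorem stmt_4 (a b c g x y : ℝ) (hx : 0 ≤ x) (hy : 0 ≤ y) (hg : 0 ≤ g)
    (ha : 0 < a) (hab : a ≤ b) (hc : Real.sqrt (3/2) < c)
    (h1 : x^2 - (3/2) * y^2 ≥ a^2 - g) (h2 : x ≤ b) :
    x^2 - c * x * y ≥ b^2 - c * b * Real.sqrt ((2/3) * (b^2 - a^2))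
      - c * Real.sqrt ((2/3) * (b^2 - a^2)) * Real.sqrt g
      - c * (b + Real.sqrt g) * Real.sqrt ((2/3) * (2 * b * Real.sqrt g + g)) := by
  have hc0 : 0 < c := lt_trans (Real.sqrt_pos.2 (by norm_num)) hc
  set s := Real.sqrt g with hsdef
  have hs0 : 0 ≤ s := Real.sqrt_nonneg g
  have hs2 : s^2 = g := Real.sq_sqrt hg
  set X := x + s with hXdef
  set B := b + s with hBdef
  have hX0 : 0 ≤ X := by positivity
  have hcon : a^2 + (3/2)*y^2 ≤ X^2 := by nlinarith
  have haX : a ≤ X := by nlinarith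
  have hXB : X ≤ B := by simp [hXdef, hBdef]; linarith
  have hmin := key_min a c X B y ha haX hXB hy hc hcon
  set SB := Real.sqrt ((2/3)*(B^2-a^2)) with hSBdef
  set S1 := Real.sqrt ((2/3)*(b^2-a^2)) with hS1def
  set S2 := Real.sqrt ((2/3)*(2*b*s + g)) with hS2def
  have hS10 : 0 ≤ S1 := Real.sqrt_nonneg _
  have hS20 : 0 ≤ S2 := Real.sqrt_nonneg _
  have hS12 : S1^2 = (2/3)*(b^2-a^2) := Real.sq_sqrt (by nlinarith)
  have hS22 : S2^2 = (2/3)*(2*b*s + g) := Real.sq_sqrt (by nlinarith)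
  have hSBle : SB ≤ S1 + S2 := by
    rw [hSBdef]
    rw [show S1 + S2 = Real.sqrt ((S1+S2)^2) by rw [Real.sqrt_sq (by positivity)]]
    apply Real.sqrt_le_sqrt
    nlinarith [mul_nonneg hS10 hS20]
  have hB0 : 0 ≤ B := by rw [hBdef]; linarith
  have hBsum : c*B*SB ≤ c*B*(S1 + S2) := by
    apply mul_le_mul_of_nonneg_left hSBle
    exact mul_nonneg hc0.le hB0
  -- x^2 - c*x*y ≥ (X^2 - c*X*y) - 2*b*s - g
  have hsub : (X^2 - c*X*y) - 2*b*s - g ≤ x^2 - c*x*y := by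
    have h1' : c*s*y ≥ 0 := by positivity
    have h2' : x*s ≤ b*s := by nlinarith
    rw [hXdef]
    nlinarith [h1', h2', hs2]
  have hB2 : B^2 = b^2 + 2*b*s + g := by rw [hBdef]; linear_combination hs2
  have hexp : c*B*(S1+S2) = c*b*S1 + c*S1*s + c*B*S2 := by rw [hBdef]; ring
  linarith [hmin, hsub, hBsum, hB2, hexp]
end

section
/- Let K be a compact topological space and f : K × [a,b] → ℝ a continuous function that is continuously differentiable in the second variable. Then g(t) := min_{x∈K} f(x,t) is Lipschitz on [a,b]. Moreover, if g is differentiable at t₀ and x₀ ∈ K satisfies f(x₀,t₀) = g(t₀), then g'(t₀) = ∂f/∂t(x₀,t₀). -/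
theorem stmt_7 (K : Type*) [TopologicalSpace K] [CompactSpace K] [Nonempty K]
    (a b : ℝ) (hab : a ≤ b) (f ft : K → ℝ → ℝ)
    (hf : Continuous (fun p : K × ℝ => f p.1 p.2))
    (hft : Continuous (fun p : K × ℝ => ft p.1 p.2))
    (hder : ∀ (x : K) (t : ℝ), t ∈ Set.Icc a b → HasDerivAt (f x) (ft x t) t)
    (g : ℝ → ℝ) (hg : ∀ t, IsLeast {v : ℝ | ∃ x : K, v = f x t} (g t)) :
    (∃ L : NNReal, LipschitzOnWith L g (Set.Icc a b)) ∧
    ∀ t₀ ∈ Set.Icc a b, ∀ x₀ : K, f x₀ t₀ = g t₀ →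
      DifferentiableAt ℝ g t₀ → deriv g t₀ = ft x₀ t₀ := by
  obtain ⟨M, hM0, hM⟩ : ∃ M : ℝ, 0 ≤ M ∧ ∀ x : K, ∀ t ∈ Set.Icc a b, |ft x t| ≤ M := by
    have hcomp : IsCompact ((Set.univ : Set K) ×ˢ Set.Icc a b) :=
      isCompact_univ.prod isCompact_Icc
    obtain ⟨C, hC⟩ := hcomp.exists_bound_of_continuousOn hft.continuousOn
    exact ⟨max C 0, le_max_right _ _, fun x t ht =>
      le_trans (by simpa [Real.norm_eq_abs] using hC (x, t) ⟨trivial, ht⟩) (le_max_left _ _)⟩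
  have hlip : ∀ x : K, LipschitzOnWith (Real.toNNReal M) (f x) (Set.Icc a b) := by
    intro x
    apply (convex_Icc a b).lipschitzOnWith_of_nnnorm_hasDerivWithin_le
      (fun t ht => (hder x t ht).hasDerivWithinAt)
    intro t ht
    rw [← NNReal.coe_le_coe, coe_nnnorm, Real.coe_toNNReal _ hM0, Real.norm_eq_abs]
    exact hM x t ht
  have key : ∀ s ∈ Set.Icc a b, ∀ t ∈ Set.Icc a b, g s - g t ≤ M * |s - t| := by
    intro s hs t ht
    obtain ⟨x, hx⟩ := (hg t).1
    have h1 : g s ≤ f x s := (hg s).2 ⟨x, rfl⟩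
    have h2 : dist (f x s) (f x t) ≤ M * dist s t := by
      have := (hlip x).dist_le_mul s hs t ht
      rwa [Real.coe_toNNReal _ hM0] at this
    rw [Real.dist_eq, Real.dist_eq] at h2
    have h3 : f x s - f x t ≤ |f x s - f x t| := le_abs_self _
    rw [hx]
    linarith
  constructor
  · refine ⟨Real.toNNReal M, LipschitzOnWith.of_dist_le_mul ?_⟩
    intro s hs t ht
    rw [Real.coe_toNNReal _ hM0, Real.dist_eq, Real.dist_eq, abs_sub_le_iff]
    constructor
    · exact key s hs t ht
    · have := key t ht s hs
      rwa [abs_sub_comm] at this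
  · intro t₀ ht₀ x₀ hx₀ hdiff
    have hmin : IsLocalMin (fun t => f x₀ t - g t) t₀ := by
      apply Filter.Eventually.of_forall
      intro t
      have h1 : g t ≤ f x₀ t := (hg t).2 ⟨x₀, rfl⟩
      simp only
      rw [hx₀]
      linarith
    have hd : HasDerivAt (fun t => f x₀ t - g t) (ft x₀ t₀ - deriv g t₀) t₀ :=
      (hder x₀ t₀ ht₀).sub hdiff.hasDerivAt
    have := hmin.hasDerivAt_eq_zero hd
    linarith
end

section
/- Let K(λ) be a positive differentiable function satisfying K'(λ) ≤ (K₀²/3)·K(λ)·(1 − K(λ)²/K₀²) whenever K(λ) ≥ K₀ > 0, and also K'(λ) ≤ 0 whenever K(λ) ≥ K₀. Then K(λ) ≤ K₀·(1 + C₁·e^{−(2/3)K₀²λ}) for all λ ≥ 0, where C₁ = max(K(0)/K₀ − 1, 0). -/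
lemma stmt_8_above (K : ℝ → ℝ) (K₀ : ℝ) (hdiff : Differentiable ℝ K)
    (hmono : ∀ l, 0 ≤ l → K₀ ≤ K l → deriv K l ≤ 0)
    {l : ℝ} (hKl : K₀ < K l) : ∀ s ∈ Set.Icc 0 l, K₀ ≤ K s := by
  by_contra h
  push_neg at h
  obtain ⟨s, hs, hKs⟩ := h
  set S := Set.Icc s l ∩ K ⁻¹' Set.Iic K₀ with hS
  have hclosed : IsClosed S := isClosed_Icc.inter (isClosed_Iic.preimage hdiff.continuous)
  have hne : S.Nonempty := ⟨s, ⟨le_refl s, hs.2⟩, hKs.le⟩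
  have hbdd : BddAbove S := ⟨l, fun t ht => ht.1.2⟩
  set t₀ := sSup S with ht₀
  have ht₀S : t₀ ∈ S := hclosed.csSup_mem hne hbdd
  have ht₀l : t₀ ≤ l := ht₀S.1.2
  have ht₀0 : 0 ≤ t₀ := hs.1.trans ht₀S.1.1
  have hgt : ∀ t ∈ Set.Ioc t₀ l, K₀ < K t := by
    intro t ht
    by_contra hc
    push_neg at hc
    have htS : t ∈ S := ⟨⟨ht₀S.1.1.trans ht.1.le, ht.2⟩, hc⟩
    exact absurd (le_csSup hbdd htS) (not_le.2 ht.1)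
  have hanti : AntitoneOn K (Set.Icc t₀ l) := by
    apply antitoneOn_of_deriv_nonpos (convex_Icc _ _) hdiff.continuous.continuousOn
      (hdiff.differentiableOn.mono interior_subset)
    intro x hx
    rw [interior_Icc] at hx
    exact hmono x (ht₀0.trans hx.1.le) (hgt x ⟨hx.1, hx.2.le⟩).le
  have hfin : K l ≤ K t₀ := hanti ⟨le_refl _, ht₀l⟩ ⟨ht₀l, le_refl l⟩ ht₀l
  have : K t₀ ≤ K₀ := ht₀S.2
  linarith

theorem stmt_8 (K : ℝ → ℝ) (K₀ : ℝ) (hK₀ : 0 < K₀)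
    (hKpos : ∀ l, 0 ≤ l → 0 < K l)
    (hdiff : Differentiable ℝ K)
    (hode : ∀ l, 0 ≤ l → K₀ ≤ K l →
      deriv K l ≤ (K₀^2 / 3) * K l * (1 - (K l)^2 / K₀^2))
    (hmono : ∀ l, 0 ≤ l → K₀ ≤ K l → deriv K l ≤ 0) :
    ∀ l, 0 ≤ l →
      K l ≤ K₀ * (1 + max (K 0 / K₀ - 1) 0 * Real.exp (-(2/3) * K₀^2 * l)) := by
  intro l hl
  set M := max (K 0 / K₀ - 1) 0 with hM
  have hM0 : 0 ≤ M := le_max_right _ _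
  have hEpos : (0:ℝ) < Real.exp (-(2/3) * K₀^2 * l) := Real.exp_pos _
  rcases le_or_gt (K l) K₀ with hcase | hcase
  · nlinarith [mul_nonneg hK₀.le (mul_nonneg hM0 hEpos.le)]
  · have hge := stmt_8_above K K₀ hdiff hmono hcase
    set c := (2:ℝ)/3 * K₀^2 with hc
    set g := fun s => (K s - K₀) * Real.exp (c * s) with hg
    have hgderiv : ∀ s, HasDerivAt g
        (deriv K s * Real.exp (c*s) + (K s - K₀) * (Real.exp (c*s) * (c * 1))) s := by
      intro s
      exact ((hdiff s).hasDerivAt.sub_const K₀).mul ((hasDerivAt_id s).const_mul c).exp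
    have hganti : AntitoneOn g (Set.Icc 0 l) := by
      apply antitoneOn_of_deriv_nonpos (convex_Icc _ _)
      · exact Continuous.continuousOn (by
          exact (hdiff.continuous.sub continuous_const).mul
            (Real.continuous_exp.comp (continuous_const.mul continuous_id)))
      · intro x _
        exact (hgderiv x).differentiableAt.differentiableWithinAt
      · intro x hx
        rw [interior_Icc] at hx
        rw [(hgderiv x).deriv]
        have hx0 : (0:ℝ) ≤ x := hx.1.le
        have hKx : K₀ ≤ K x := hge x ⟨hx0, hx.2.le⟩
        have hKd := hode x hx0 hKx
        have hexp : 0 < Real.exp (c*x) := Real.exp_pos _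
        have key : deriv K x + c * (K x - K₀) ≤ 0 := by
          have h1 : (K₀^2/3) * K x * (1 - (K x)^2 / K₀^2) + c*(K x - K₀) ≤ 0 := by
            have heq : (K₀^2/3) * K x * (1 - (K x)^2/K₀^2) = (K₀^2 * K x - (K x)^3)/3 := by
              field_simp
            rw [heq, hc]
            nlinarith [mul_nonneg (sq_nonneg (K x - K₀)) (by linarith : (0:ℝ) ≤ K x + 2*K₀)]
          linarith
        have hfact : deriv K x * Real.exp (c*x) + (K x - K₀) * (Real.exp (c*x) * (c * 1))
            = (deriv K x + c * (K x - K₀)) * Real.exp (c*x) := by ring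
        rw [hfact]
        exact mul_nonpos_of_nonpos_of_nonneg key hexp.le
    have hgl : g l ≤ g 0 := hganti ⟨le_refl 0, hl⟩ ⟨hl, le_refl l⟩ hl
    have hg0 : g 0 = K 0 - K₀ := by simp [hg]
    have hK0 : K₀ ≤ K 0 := hge 0 ⟨le_refl 0, hl⟩
    have hMK : K 0 - K₀ ≤ K₀ * M := by
      have h1 : K 0 / K₀ - 1 ≤ M := le_max_left _ _
      have : K₀ * (K 0 / K₀ - 1) = K 0 - K₀ := by field_simp
      nlinarith
    have hEl : Real.exp (-(2/3) * K₀^2 * l) = (Real.exp (c * l))⁻¹ := by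
      rw [← Real.exp_neg]
      congr 1
      rw [hc]; ring
    have hexpl : 0 < Real.exp (c * l) := Real.exp_pos _
    have hgle : (K l - K₀) * Real.exp (c * l) ≤ K₀ * M := by
      calc (K l - K₀) * Real.exp (c * l) = g l := rfl
        _ ≤ g 0 := hgl
        _ = K 0 - K₀ := hg0
        _ ≤ K₀ * M := hMK
    rw [hEl]
    have h2 : K l - K₀ ≤ K₀ * M * (Real.exp (c * l))⁻¹ := by
      rw [← le_div_iff₀ hexpl] at hgle
      rw [div_eq_mul_inv] at hgle
      linarith
    nlinarith [h2]
end

section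
/- Let S : [0,∞) → ℝ be a positive, locally Lipschitz function satisfying, at almost every λ, (d/dλ) log S(λ) ≥ c − ε(λ) − E(g₀/S(λ)), where c > 0, ε : [0,∞) → [0,∞) is decreasing with ε(λ) → 0 as λ → ∞, g₀ ≥ 0, and E : [0,∞) → [0,∞) is increasing, continuous, with E(0) = 0. Suppose λ* ≥ 0 is such that ε(λ) ≤ c/3 for all λ ≥ λ*, and Ŝ > 0 satisfies E(g₀/s) < c/3 for all s ≥ Ŝ. If S(λ) ≥ Ŝ for all λ ∈ [0, λ*], then S(λ) ≥ Ŝ for all λ ≥ 0, and moreover (d/dλ) log S(λ) ≥ c/3 > 0 at almost every λ ≥ λ*. -/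
open Set Filter MeasureTheory Topology NNReal

private lemma lipOn_weaken {K K' : ℝ≥0} {f : ℝ → ℝ} {s : Set ℝ}
    (h : LipschitzOnWith K f s) (hK : K ≤ K') : LipschitzOnWith K' f s :=
  fun x hx y hy => (h hx hy).trans
    (mul_le_mul_left (by exact_mod_cast ENNReal.coe_le_coe.2 hK) _)

/-- Bootstrap lemma: a locally Lipschitz function with a.e. positive derivative
whenever it exceeds a threshold `θ < Shat`, starting above `Shat`, stays above `Shat`. -/
private lemma boot (S : ℝ → ℝ) (a b θ Shat : ℝ) (hab : a < b)
    (hS : LocallyLipschitz S)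
    (N : Set ℝ) (hN : MeasureTheory.volume N = 0)
    (hθ : θ < Shat) (hSa : Shat ≤ S a)
    (hder : ∀ x, x ∈ Set.Ico a b → x ∉ N → θ < S x → ∃ d, 0 < d ∧ HasDerivAt S d x) :
    Shat ≤ S b := by
  by_contra hcon
  push_neg at hcon
  set M : ℝ := max θ (S b) with hMdef
  have hM : M < Shat := max_lt hθ hcon
  set γ : ℝ := Shat - M with hγdef
  have hγ : 0 < γ := by simp [hγdef]; linarith
  -- a uniform local Lipschitz constant on [a,b]
  obtain ⟨K₀, hK⟩ : ∃ K₀ : ℝ≥0, ∀ x ∈ Icc a b, ∃ u ∈ 𝓝 x, LipschitzOnWith K₀ S u := by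
    choose K t ht hl using hS
    obtain ⟨F, -, hF⟩ := isCompact_Icc.elim_nhds_subcover (fun x => interior (t x))
      (fun x _ => interior_mem_nhds.2 (ht x))
    refine ⟨F.sup K, fun x hx => ?_⟩
    obtain ⟨i, hiF, hxi⟩ := Set.mem_iUnion₂.1 (hF hx)
    exact ⟨t i, mem_nhds_iff.2 ⟨interior (t i), interior_subset, isOpen_interior, hxi⟩,
      lipOn_weaken (hl i) (Finset.le_sup hiF)⟩
  set Kr : ℝ := (K₀ : ℝ) with hKrdef
  have hKr : 0 ≤ Kr := K₀.coe_nonneg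
  set η : ℝ := γ / (2 * (b - a) + 2) with hηdef
  have hη : 0 < η := div_pos hγ (by linarith)
  set η₂ : ℝ := γ / (8 * (Kr + 1)) with hη₂def
  have hη₂ : 0 < η₂ := div_pos hγ (by nlinarith)
  obtain ⟨U, hNU, hUopen, hUvol⟩ := Set.exists_isOpen_lt_of_lt N (ENNReal.ofReal η₂)
    (by rw [hN]; exact ENNReal.ofReal_pos.2 hη₂)
  have hUfin : ∀ s : Set ℝ, volume (U ∩ s) ≠ ⊤ :=
    fun s => ((measure_mono Set.inter_subset_left).trans_lt
      (hUvol.trans_le le_top)).ne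
  set m : ℝ → ℝ := fun y => (volume (U ∩ Set.Ioc a y)).toReal with hmdef
  have hm0 : ∀ y, 0 ≤ m y := fun y => ENNReal.toReal_nonneg
  have hmono : Monotone m := by
    intro y z hyz
    exact ENNReal.toReal_mono (hUfin _)
      (measure_mono (Set.inter_subset_inter_right _ (Set.Ioc_subset_Ioc_right hyz)))
  have hlip1 : ∀ y z : ℝ, y ≤ z → m z - m y ≤ z - y := by
    intro y z hyz
    have hsub : U ∩ Set.Ioc a z ⊆ (U ∩ Set.Ioc a y) ∪ Set.Ioc y z := by
      rintro w ⟨hw1, hw2, hw3⟩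
      rcases le_or_gt w y with h | h
      · exact Or.inl ⟨hw1, hw2, h⟩
      · exact Or.inr ⟨h, hw3⟩
    have h1 : volume (U ∩ Set.Ioc a z) ≤ volume (U ∩ Set.Ioc a y) + ENNReal.ofReal (z - y) := by
      refine (measure_mono hsub).trans ((measure_union_le _ _).trans ?_)
      rw [Real.volume_Ioc]
    have h2 := ENNReal.toReal_mono (by
        exact ENNReal.add_ne_top.2 ⟨hUfin _, ENNReal.ofReal_ne_top⟩) h1
    rw [ENNReal.toReal_add (hUfin _) ENNReal.ofReal_ne_top,
      ENNReal.toReal_ofReal (by linarith)] at h2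
    simpa [hmdef] using by linarith [h2]
  have hmcont : Continuous m := by
    refine (LipschitzWith.of_dist_le_mul (K := 1) fun y z => ?_).continuous
    rw [Real.dist_eq, Real.dist_eq, NNReal.coe_one, one_mul]
    rcases le_total y z with h | h
    · rw [abs_of_nonpos (by linarith [hmono h]), abs_of_nonpos (by linarith)]
      linarith [hlip1 y z h]
    · rw [abs_of_nonneg (by linarith [hmono h]), abs_of_nonneg (by linarith)]
      linarith [hlip1 z y h]
  have hmb : m b < η₂ := by
    have : m b ≤ (volume U).toReal :=
      ENNReal.toReal_mono (hUvol.trans_le le_top).ne (measure_mono Set.inter_subset_left)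
    exact this.trans_lt (ENNReal.toReal_lt_of_lt_ofReal hUvol)
  -- the barrier
  set B : ℝ → ℝ := fun y => Shat - η * (y - a) - 2 * Kr * m y with hBdef
  have hBanti : ∀ y z : ℝ, y ≤ z → B z ≤ B y := by
    intro y z h
    have h1 := hmono h
    simp only [hBdef]
    nlinarith [mul_nonneg hη.le (sub_nonneg.2 h), mul_nonneg hKr (sub_nonneg.2 h1)]
  have hBb : M < B b := by
    have h1 : η * (b - a) < γ / 2 := by
      rw [hηdef, div_mul_eq_mul_div, div_lt_div_iff₀ (by linarith) (by norm_num)]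
      nlinarith
    have h2 : 2 * Kr * m b ≤ γ / 4 := by
      have : 2 * Kr * m b ≤ 2 * Kr * η₂ := by
        nlinarith [mul_nonneg hKr (by linarith : (0:ℝ) ≤ η₂ - m b)]
      have h3 : 2 * Kr * η₂ ≤ γ / 4 := by
        rw [hη₂def]
        rw [mul_div_assoc', div_le_div_iff₀ (by nlinarith) (by norm_num)]
        nlinarith
      linarith
    simp only [hBdef]
    linarith
  set s : Set ℝ := {y | B y ≤ S y} with hsdef
  have hScont : Continuous S := hS.continuous
  have hsclosed : IsClosed (s ∩ Icc a b) := by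
    refine IsClosed.inter ?_ isClosed_Icc
    exact isClosed_le (by fun_prop) hScont
  have has : a ∈ s := by
    simp only [hsdef, Set.mem_setOf_eq, hBdef]
    nlinarith [hm0 a, mul_nonneg hKr (hm0 a)]
  have key : Icc a b ⊆ s := by
    refine hsclosed.Icc_subset_of_forall_exists_gt has ?_
    rintro x ⟨hxs, hxI⟩ y hy
    have hBx : M < B x := hBb.trans_le (hBanti x b hxI.2.le)
    have hSxB : B x ≤ S x := hxs
    have hSx : θ < S x := lt_of_lt_of_le (lt_of_le_of_lt (le_max_left _ _) hBx) hSxB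
    have hw : x < min y b := lt_min hy hxI.2
    by_cases hxN : x ∈ N
    · -- inside the open cover U: use Lipschitz bound; measure term compensates
      obtain ⟨u, hu, hlip⟩ := hK x ⟨hxI.1, hxI.2.le⟩
      obtain ⟨δ', hδ', hball'⟩ := Metric.mem_nhds_iff.1 hu
      obtain ⟨δ, hδ, hball⟩ := Metric.isOpen_iff.1 hUopen x (hNU hxN)
      set z : ℝ := min (min y b) (x + min δ δ' / 2) with hzdef
      have hδδ' : 0 < min δ δ' := lt_min hδ hδ'
      have hxz : x < z := lt_min hw (by linarith)
      have hzy : z ≤ y := (min_le_left _ _).trans (min_le_left _ _)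
      have hzb : z ≤ b := (min_le_left _ _).trans (min_le_right _ _)
      have hzδ : z - x < min δ δ' := by
        have : z ≤ x + min δ δ' / 2 := min_le_right _ _
        linarith
      have hIocU : Set.Ioc x z ⊆ U := by
        intro w hw'
        apply hball
        rw [Metric.mem_ball, Real.dist_eq,
          abs_of_pos (by linarith [hw'.1] : (0:ℝ) < w - x)]
        have h5 : min δ δ' ≤ δ := min_le_left _ _
        have h6 := hw'.2
        linarith
      -- measure increment
      have hminc : m x + (z - x) ≤ m z := by
        have hdisj : Disjoint (U ∩ Set.Ioc a x) (Set.Ioc x z) := by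
          rw [Set.disjoint_left]
          rintro w ⟨_, _, hw2⟩ ⟨hw3, _⟩
          exact absurd hw2 (not_le.2 hw3)
        have hsub : (U ∩ Set.Ioc a x) ∪ Set.Ioc x z ⊆ U ∩ Set.Ioc a z := by
          rintro w (⟨hw1, hw2, hw3⟩ | hw')
          · exact ⟨hw1, hw2, hw3.trans hxz.le⟩
          · exact ⟨hIocU hw', lt_of_le_of_lt hxI.1 hw'.1, hw'.2⟩
        have h1 : volume (U ∩ Set.Ioc a x) + ENNReal.ofReal (z - x)
            ≤ volume (U ∩ Set.Ioc a z) := by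
          rw [← Real.volume_Ioc, ← measure_union hdisj measurableSet_Ioc]
          exact measure_mono hsub
        have h2 := ENNReal.toReal_mono (hUfin _) h1
        rw [ENNReal.toReal_add (hUfin _) ENNReal.ofReal_ne_top,
          ENNReal.toReal_ofReal (by linarith)] at h2
        simpa [hmdef] using h2
      -- Lipschitz bound
      have hzu : z ∈ u := hball' (by
        rw [Metric.mem_ball, Real.dist_eq, abs_of_pos (by linarith)]
        exact hzδ.trans_le (min_le_right _ _))
      have hxu : x ∈ u := hball' (Metric.mem_ball_self hδ')
      have hlb : |S z - S x| ≤ Kr * (z - x) := by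
        have h7 := hlip.dist_le_mul z hzu x hxu
        rw [Real.dist_eq, Real.dist_eq,
          abs_of_pos (by linarith : (0:ℝ) < z - x)] at h7
        rw [hKrdef]
        exact h7
      have hSz : S x - Kr * (z - x) ≤ S z := by
        have := abs_le.1 hlb
        linarith [this.1]
      refine ⟨z, ?_, hxz, hzy⟩
      simp only [hsdef, Set.mem_setOf_eq, hBdef] at hSxB ⊢
      nlinarith [mul_nonneg hη.le (sub_pos.2 hxz).le, mul_nonneg hKr (sub_pos.2 hxz).le,
        mul_le_mul_of_nonneg_left hminc hKr]
    · -- positive derivative point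
      obtain ⟨d, hd0, hdd⟩ := hder x ⟨hxI.1, hxI.2⟩ hxN hSx
      have hslope : Tendsto (slope S x) (𝓝[>] x) (𝓝 d) :=
        (hasDerivAt_iff_tendsto_slope.1 hdd).mono_left
          (nhdsWithin_mono x (fun w hw' => ne_of_gt hw'))
      have h1 : ∀ᶠ w in 𝓝[>] x, 0 < slope S x w := hslope.eventually (eventually_gt_nhds hd0)
      have h2 : Set.Ioc x (min y b) ∈ 𝓝[>] x := Ioc_mem_nhdsGT hw
      obtain ⟨w, hw1, hw2⟩ := (h1.and (eventually_of_mem h2 (fun w hw' => hw'))).exists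
      have hxw : x < w := hw2.1
      have hSw : S x < S w := by
        have h3 : 0 < (S w - S x) / (w - x) := by rwa [slope_def_field] at hw1
        have := mul_pos h3 (sub_pos.2 hxw)
        rw [div_mul_cancel₀ _ (by linarith : w - x ≠ 0)] at this
        linarith
      refine ⟨w, ?_, hxw, hw2.2.trans (min_le_left _ _)⟩
      simp only [hsdef, Set.mem_setOf_eq]
      calc B w ≤ B x := hBanti x w hxw.le
        _ ≤ S x := hSxB
        _ ≤ S w := hSw.le
  have hbs : b ∈ s := key ⟨hab.le, le_rfl⟩
  have : B b ≤ S b := hbs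
  have hSbM : S b ≤ M := le_max_right _ _
  linarith

theorem stmt_10 (S ε E : ℝ → ℝ) (c g₀ lstar Shat : ℝ)
    (hc : 0 < c) (hg₀ : 0 ≤ g₀) (hlstar : 0 ≤ lstar) (hShat : 0 < Shat)
    (hSpos : ∀ l, 0 < S l) (hSlip : LocallyLipschitz S)
    (hεnonneg : ∀ l, 0 ≤ l → 0 ≤ ε l)
    (hεdec : ∀ l₁ l₂, 0 ≤ l₁ → l₁ ≤ l₂ → ε l₂ ≤ ε l₁)
    (hεlim : Filter.Tendsto ε Filter.atTop (nhds 0))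
    (hEnonneg : ∀ s, 0 ≤ s → 0 ≤ E s)
    (hEmono : Monotone E) (hEcont : Continuous E) (hE0 : E 0 = 0)
    (hae : ∀ᵐ l ∂MeasureTheory.volume, 0 ≤ l →
      ∃ d : ℝ, HasDerivAt S d l ∧ d / S l ≥ c - ε l - E (g₀ / S l))
    (hεstar : ∀ l, lstar ≤ l → ε l ≤ c / 3)
    (hEhat : ∀ s, Shat ≤ s → E (g₀ / s) < c / 3)
    (hinit : ∀ l ∈ Set.Icc 0 lstar, Shat ≤ S l) :
    (∀ l, 0 ≤ l → Shat ≤ S l) ∧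
    (∀ᵐ l ∂MeasureTheory.volume, lstar ≤ l →
      ∃ d : ℝ, HasDerivAt S d l ∧ d / S l ≥ c / 3) := by
  -- choose a threshold θ < Shat still satisfying the E-bound
  obtain ⟨θ, hθpos, hθlt, hθE⟩ : ∃ θ : ℝ, 0 < θ ∧ θ < Shat ∧ E (g₀ / θ) < c / 3 := by
    have hcontE : ContinuousAt (fun x : ℝ => E (g₀ / x)) Shat :=
      hEcont.continuousAt.comp (continuousAt_const.div continuousAt_id hShat.ne')
    have hmem : {x : ℝ | E (g₀ / x) < c / 3} ∈ 𝓝 Shat :=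
      hcontE (Iio_mem_nhds (hEhat Shat le_rfl))
    obtain ⟨r, hr, hball⟩ := Metric.mem_nhds_iff.1 hmem
    refine ⟨max (Shat / 2) (Shat - r / 2), lt_max_of_lt_left (by linarith), ?_, ?_⟩
    · exact max_lt (by linarith) (by linarith)
    · apply hball
      rw [Metric.mem_ball, Real.dist_eq, abs_of_nonpos (by
        rcases max_cases (Shat / 2) (Shat - r / 2) with ⟨h, _⟩ | ⟨h, _⟩ <;> rw [h] <;> linarith)]
      rcases max_cases (Shat / 2) (Shat - r / 2) with ⟨h, h'⟩ | ⟨h, _⟩ <;> rw [h] <;> linarith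
  set N : Set ℝ := {l | ¬ (0 ≤ l →
    ∃ d : ℝ, HasDerivAt S d l ∧ d / S l ≥ c - ε l - E (g₀ / S l))} with hNdef
  have hN : MeasureTheory.volume N = 0 := MeasureTheory.ae_iff.mp hae
  have hEθ : ∀ x : ℝ, θ < S x → E (g₀ / S x) < c / 3 := by
    intro x hx
    refine lt_of_le_of_lt (hEmono ?_) hθE
    exact div_le_div_of_nonneg_left hg₀ hθpos hx.le
  have part1 : ∀ l, 0 ≤ l → Shat ≤ S l := by
    intro l hl
    rcases le_or_gt l lstar with h | h
    · exact hinit l ⟨hl, h⟩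
    · refine boot S lstar l θ Shat h hSlip N hN hθlt (hinit lstar ⟨hlstar, le_rfl⟩) ?_
      intro x hx hxN hθx
      have h0 : (0:ℝ) ≤ x := hlstar.trans hx.1
      have hP : 0 ≤ x → ∃ d : ℝ, HasDerivAt S d x ∧ d / S x ≥ c - ε x - E (g₀ / S x) := by
        by_contra hq
        exact hxN hq
      obtain ⟨d, hd, hdb⟩ := hP h0
      refine ⟨d, ?_, hd⟩
      have hε1 : ε x ≤ c / 3 := hεstar x hx.1
      have hE1 : E (g₀ / S x) < c / 3 := hEθ x hθx
      have hds : 0 < d / S x := lt_of_lt_of_le (by linarith) hdb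
      have hSxpos := hSpos x
      by_contra hd0
      push_neg at hd0
      have : d / S x ≤ 0 := div_nonpos_of_nonpos_of_nonneg hd0 hSxpos.le
      linarith
  refine ⟨part1, ?_⟩
  filter_upwards [hae] with l h hl
  have h0 : (0:ℝ) ≤ l := hlstar.trans hl
  obtain ⟨d, hd, hdb⟩ := h h0
  refine ⟨d, hd, ?_⟩
  have hE1 : E (g₀ / S l) < c / 3 := hEhat _ (part1 l h0)
  have hε1 : ε l ≤ c / 3 := hεstar l hl
  linarith
end
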